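/- Let T = S(n_1, ..., n_ℓ) be an all-even subdivided star with ℓ ≥ 3 branches and n_1 ≥ n_2 ≥ ... ≥ n_ℓ all positive even integers. Then γ'_SMB(T) ≤ max({i + ⌈log_2 n_i⌉ : 1 ≤ i ≤ ℓ−2} ∪ {ℓ−2 + ⌈log_2(n_{ℓ−1} + n_ℓ + 1)⌉}). -/

import Mathlib

open scoped Classical

open scoped Classical

noncomputable section

/-- Minimax value of the Maker–Breaker game on hypergraph with edge set `E`:
`mbVal E t M B` is the minimum number of further moves Maker needs to claim all
vertices of some hyperedge (Maker has claimed `M`, Breaker has claimed `B`,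
`t = true` iff Maker moves next), under optimal play; `⊤` if Maker cannot win. -/
def mbVal {V : Type} [Fintype V] (E : Set (Finset V)) :
    Bool → Finset V → Finset V → ℕ∞
  | true, M, B =>
      if ∃ e ∈ E, e ⊆ M then 0
      else ⨅ v ∈ Finset.univ \ (M ∪ B), (1 + mbVal E false (insert v M) B)
  | false, M, B =>
      if ∃ e ∈ E, e ⊆ M then 0
      else if Finset.univ \ (M ∪ B) = ∅ then ⊤
      else ⨆ v ∈ Finset.univ \ (M ∪ B), mbVal E true M (insert v B)
termination_by _t M B => (Finset.univ \ (M ∪ B)).card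
decreasing_by
  all_goals
    apply Finset.card_lt_card
    rw [Finset.ssubset_iff_of_subset]
    · refine ⟨v, ‹_›, by simp⟩
    · intro x hx
      simp only [Finset.mem_sdiff, Finset.mem_univ, true_and, Finset.mem_union,
        Finset.mem_insert] at hx ⊢
      tauto

/-- The closed neighborhood of `v` as a finset. -/
def closedNbhdFinset {V : Type} [Fintype V] (G : SimpleGraph V) (v : V) : Finset V :=
  Finset.univ.filter (fun w => w = v ∨ G.Adj v w)

/-- The closed neighborhood hypergraph of a graph. -/
def nbhdHyp {V : Type} [Fintype V] (G : SimpleGraph V) : Set (Finset V) :=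
  Set.range (closedNbhdFinset G)

/-- `γ'_SMB(G)`: the number of moves Staller (= Maker on the closed neighborhood
hypergraph, moving first) needs to win the Maker–Breaker domination game on `G`. -/
def gammaSMB' {V : Type} [Fintype V] (G : SimpleGraph V) : ℕ∞ :=
  mbVal (nbhdHyp G) true ∅ ∅

end


/-- The subdivided star `S(n 0, …, n (ℓ-1))`: `ℓ` vertex-disjoint paths
(branches) of orders `n 0, …, n (ℓ-1)` together with a central vertex (`none`)
adjacent to one endpoint of each branch. -/
def subdividedStar (ℓ : ℕ) (n : ℕ → ℕ) :
    SimpleGraph (Option (Σ i : Fin ℓ, Fin (n i))) :=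
  SimpleGraph.fromRel (fun a b =>
    (∃ (i : Fin ℓ) (h : 0 < n i), a = none ∧ b = some ⟨i, ⟨0, h⟩⟩) ∨
    (∃ (i : Fin ℓ) (j : Fin (n i)) (hj : (j : ℕ) + 1 < n i),
      a = some ⟨i, j⟩ ∧ b = some ⟨i, ⟨(j : ℕ) + 1, hj⟩⟩))

/-!
Staller claims the first vertices of branches `0, 1, …` in turn, moving on to the next branch as
long as Dominator answers on the branch just opened. The first time he does not, say on branch `r`,
the rest of that branch is a *free path*: unclaimed vertices `x₀, …, x_{k-1}` with
`N[xᵢ] ⊆ M ∪ {xᵢ₋₁, xᵢ, xᵢ₊₁}` for Staller's set `M`, here of odd order `k = n_r - 1`. If Dominator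
always answers, after `ℓ - 2` openings branch `ℓ-2`, the center and branch `ℓ-1` form a free path
of odd order `n_{ℓ-2} + n_{ℓ-1} + 1`, the other neighbours of the center being Staller's.

On a free path of odd order `k < 2^t` Staller wins within `t` moves: she claims a vertex splitting
it into two free paths of odd orders `< 2^(t-1)`, Dominator can touch only one of them, and on a
path of order one Staller wins at once.
-/

section MakerBreaker

variable {V : Type} [Fintype V] {E : Set (Finset V)} {M B : Finset V}

theorem mbVal_true_le_one_add [DecidableEq V] {v : V} (hv : v ∉ M ∪ B) :
    mbVal E true M B ≤ 1 + mbVal E false (insert v M) B := by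
  -- `mbVal` unfolds to `insert` and `∪` taken with classical decidable equality.
  obtain rfl : ‹DecidableEq V› = fun a b => Classical.propDecidable (a = b) :=
    Subsingleton.elim _ _
  rw [mbVal]
  split_ifs
  · exact zero_le
  · exact biInf_le (fun w => 1 + mbVal E false (insert w M) B) (by simpa using hv)

theorem mbVal_false_eq_zero (h : ∃ e ∈ E, e ⊆ M) : mbVal E false M B = 0 := by
  rw [mbVal, if_pos h]

theorem mbVal_false_le [DecidableEq V] {k : ℕ∞} (hfree : ∃ u, u ∉ M ∪ B)
    (h : ∀ u ∉ M ∪ B, mbVal E true M (insert u B) ≤ k) : mbVal E false M B ≤ k := by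
  obtain rfl : ‹DecidableEq V› = fun a b => Classical.propDecidable (a = b) :=
    Subsingleton.elim _ _
  obtain ⟨u₀, hu₀⟩ := hfree
  rw [mbVal]
  split_ifs with hwin hfull
  · exact zero_le
  · exact absurd (hfull ▸ Finset.mem_sdiff.2 ⟨Finset.mem_univ u₀, hu₀⟩) (Finset.notMem_empty u₀)
  · exact iSup₂_le fun u hu => h u (Finset.mem_sdiff.1 hu).2

end MakerBreaker

section FreePath

variable {V : Type} [Fintype V] [DecidableEq V] {G : SimpleGraph V}

structure IsFreePath (G : SimpleGraph V) (seg : ℕ → V) (k : ℕ) (M B : Finset V) : Prop where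
  injOn : Set.InjOn seg (Set.Iio k)
  notMem_maker : ∀ i < k, seg i ∉ M
  notMem_breaker : ∀ i < k, seg i ∉ B
  closedNbhd_subset : ∀ i < k, ∀ w ∈ closedNbhdFinset G (seg i),
    w ∈ M ∨ ∃ i' < k, i ≤ i' + 1 ∧ i' ≤ i + 1 ∧ w = seg i'

namespace IsFreePath

variable {seg : ℕ → V} {k j : ℕ} {M B : Finset V} {u : V}

theorem notMem_union (h : IsFreePath G seg k M B) {i : ℕ} (hi : i < k) : seg i ∉ M ∪ B := by
  rw [Finset.mem_union, not_or]
  exact ⟨h.notMem_maker i hi, h.notMem_breaker i hi⟩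

theorem claim_left (h : IsFreePath G seg k M B) (hj : j < k) (hu : ∀ i < j, u ≠ seg i) :
    IsFreePath G seg j (insert (seg j) M) (insert u B) where
  injOn _ hi _ hi' := h.injOn (lt_trans hi hj) (lt_trans hi' hj)
  notMem_maker i hi := by
    rw [Finset.mem_insert, not_or]
    exact ⟨fun he => absurd (h.injOn (hi.trans hj) hj he) hi.ne, h.notMem_maker i (hi.trans hj)⟩
  notMem_breaker i hi := by
    rw [Finset.mem_insert, not_or]
    exact ⟨fun he => hu i hi he.symm, h.notMem_breaker i (hi.trans hj)⟩
  closedNbhd_subset i hi w hw := by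
    obtain hM | ⟨i', hi', hle, hle', rfl⟩ := h.closedNbhd_subset i (hi.trans hj) w hw
    · exact Or.inl (Finset.mem_insert_of_mem hM)
    · rcases lt_or_ge i' j with hlt | hge
      · exact Or.inr ⟨i', hlt, hle, hle', rfl⟩
      · left
        rw [show i' = j by omega]
        exact Finset.mem_insert_self _ _

theorem claim_right (h : IsFreePath G seg k M B) (hj : j < k)
    (hu : ∀ i, j < i → i < k → u ≠ seg i) :
    IsFreePath G (fun i => seg (j + 1 + i)) (k - j - 1) (insert (seg j) M) (insert u B) where
  injOn i hi i' hi' he := by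
    have hi : i < k - j - 1 := hi
    have hi' : i' < k - j - 1 := hi'
    have := h.injOn (show j + 1 + i < k by omega) (show j + 1 + i' < k by omega) he
    omega
  notMem_maker i hi := by
    rw [Finset.mem_insert, not_or]
    exact ⟨fun he => absurd (h.injOn (show j + 1 + i < k by omega) hj he) (by omega),
      h.notMem_maker _ (by omega)⟩
  notMem_breaker i hi := by
    rw [Finset.mem_insert, not_or]
    exact ⟨fun he => hu _ (by omega) (by omega) he.symm, h.notMem_breaker _ (by omega)⟩
  closedNbhd_subset i hi w hw := by
    obtain hM | ⟨i', hi', hle, hle', rfl⟩ := h.closedNbhd_subset _ (by omega) w hw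
    · exact Or.inl (Finset.mem_insert_of_mem hM)
    · rcases lt_or_ge j i' with hlt | hge
      · exact Or.inr ⟨i' - (j + 1), by omega, by omega, by omega, by congr 1; omega⟩
      · left
        rw [show i' = j by omega]
        exact Finset.mem_insert_self _ _

end IsFreePath

theorem exists_odd_split {k t : ℕ} (hk : Odd k) (hk3 : 3 ≤ k) (hkt : k < 2 ^ (t + 1)) :
    ∃ j, Odd j ∧ j < k ∧ j < 2 ^ t ∧ Odd (k - j - 1) ∧ k - j - 1 < 2 ^ t := by
  have ht : t ≠ 0 := by rintro rfl; omega
  have hpow : 2 ^ (t + 1) = 2 * 2 ^ t := by ring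
  have heven : Even (2 ^ t) := (Nat.even_pow' ht).2 even_two
  obtain ⟨a, rfl⟩ := hk
  obtain ⟨b, hb⟩ := heven
  rcases Nat.even_or_odd a with ⟨c, rfl⟩ | ⟨c, rfl⟩
  · exact ⟨2 * c - 1, ⟨c - 1, by omega⟩, by omega, by omega, ⟨c, by omega⟩, by omega⟩
  · exact ⟨2 * c + 1, ⟨c, rfl⟩, by omega, by omega, ⟨c, by omega⟩, by omega⟩

theorem lt_two_pow_clog_of_odd {k : ℕ} (hk : Odd k) (hk1 : 1 < k) : k < 2 ^ Nat.clog 2 k := by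
  refine (Nat.le_pow_clog one_lt_two k).lt_of_ne fun he => ?_
  have hc : Nat.clog 2 k ≠ 0 := (Nat.clog_pos one_lt_two hk1).ne'
  exact Nat.not_even_iff_odd.2 hk (he ▸ (Nat.even_pow' hc).2 even_two)

theorem mbVal_le_of_isFreePath {seg : ℕ → V} {k : ℕ} {M B : Finset V} (t : ℕ)
    (hk : Odd k) (hkt : k < 2 ^ t) (h : IsFreePath G seg k M B) :
    mbVal (nbhdHyp G) true M B ≤ t := by
  induction t generalizing seg k M B with
  | zero => obtain ⟨a, rfl⟩ := hk; simp at hkt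
  | succ t ih =>
    rcases (Nat.succ_le_of_lt hk.pos).eq_or_lt with rfl | hk1
    · have hwin : ∃ e ∈ nbhdHyp G, e ⊆ insert (seg 0) M := by
        refine ⟨_, ⟨seg 0, rfl⟩, fun w hw => ?_⟩
        obtain hM | ⟨i', hi', -, -, rfl⟩ := h.closedNbhd_subset 0 one_pos w hw
        · exact Finset.mem_insert_of_mem hM
        · rw [Nat.lt_one_iff.1 hi']
          exact Finset.mem_insert_self _ _
      calc mbVal (nbhdHyp G) true M B
          ≤ 1 + mbVal (nbhdHyp G) false (insert (seg 0) M) B :=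
            mbVal_true_le_one_add (h.notMem_union one_pos)
        _ ≤ ((t + 1 : ℕ) : ℕ∞) := by rw [mbVal_false_eq_zero hwin]; simp
    obtain ⟨j, hj, hjk, hjt, hr, hrt⟩ := exists_odd_split hk (by obtain ⟨a, rfl⟩ := hk; omega) hkt
    have hfree : ∃ u, u ∉ insert (seg j) M ∪ B := by
      refine ⟨seg 0, ?_⟩
      rw [Finset.insert_union, Finset.mem_insert, not_or]
      exact ⟨fun he => hj.pos.ne (h.injOn (show 0 < k by omega) hjk he),
        h.notMem_union (by omega)⟩
    have hreply : ∀ u ∉ insert (seg j) M ∪ B,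
        mbVal (nbhdHyp G) true (insert (seg j) M) (insert u B) ≤ t := by
      intro u _
      by_cases hright : ∃ i, j < i ∧ i < k ∧ u = seg i
      · obtain ⟨i₀, hji₀, hi₀k, rfl⟩ := hright
        refine ih hj hjt (h.claim_left hjk fun i hi he => ?_)
        exact absurd (h.injOn hi₀k (show i < k by omega) he) (by omega)
      · push Not at hright
        exact ih hr hrt (h.claim_right hjk hright)
    calc mbVal (nbhdHyp G) true M B
        ≤ 1 + mbVal (nbhdHyp G) false (insert (seg j) M) B :=
          mbVal_true_le_one_add (h.notMem_union hjk)
      _ ≤ 1 + (t : ℕ∞) := by gcongr; exact mbVal_false_le hfree hreply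
      _ = ((t + 1 : ℕ) : ℕ∞) := by push_cast; ring

end FreePath

section SubdividedStar

variable {ℓ : ℕ} {n : ℕ → ℕ}

/-- Vertex `q` of branch `i`, counted from the center; the center when `(i, q)` is out of range. -/
def branchVertex (ℓ : ℕ) (n : ℕ → ℕ) (i q : ℕ) : Option (Σ i : Fin ℓ, Fin (n i)) :=
  if h : i < ℓ ∧ q < n i then some ⟨⟨i, h.1⟩, ⟨q, h.2⟩⟩ else none

theorem some_eq_branchVertex (i : Fin ℓ) (q : Fin (n i)) :
    some ⟨i, q⟩ = branchVertex ℓ n i q := by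
  rw [branchVertex, dif_pos ⟨i.isLt, q.isLt⟩]

theorem branchVertex_ne_none {i q : ℕ} (hi : i < ℓ) (hq : q < n i) :
    branchVertex ℓ n i q ≠ none := by
  simp [branchVertex, hi, hq]

theorem branchVertex_inj {i q i' q' : ℕ} (hi : i < ℓ) (hq : q < n i) (hi' : i' < ℓ)
    (hq' : q' < n i') : branchVertex ℓ n i q = branchVertex ℓ n i' q' ↔ i = i' ∧ q = q' := by
  constructor
  · intro h
    simp only [branchVertex, dif_pos (And.intro hi hq), dif_pos (And.intro hi' hq'),
      Option.some.injEq, Sigma.mk.inj_iff, Fin.mk.injEq] at h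
    obtain ⟨rfl, h⟩ := h
    exact ⟨rfl, by simpa using h⟩
  · rintro ⟨rfl, rfl⟩
    rfl

theorem mem_closedNbhd_none {w : Option (Σ i : Fin ℓ, Fin (n i))}
    (hw : w ∈ closedNbhdFinset (subdividedStar ℓ n) none) :
    w = none ∨ ∃ i < ℓ, w = branchVertex ℓ n i 0 := by
  simp only [closedNbhdFinset, Finset.mem_filter, Finset.mem_univ, true_and, subdividedStar,
    SimpleGraph.fromRel_adj] at hw
  obtain rfl | ⟨-, (⟨i, hi, -, rfl⟩ | ⟨i, j, _, h, -⟩) | (⟨i, hi, -, h⟩ | ⟨i, j, _, -, h⟩)⟩ := hw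
  · exact Or.inl rfl
  · exact Or.inr ⟨i, i.isLt, some_eq_branchVertex i ⟨0, hi⟩⟩
  all_goals exact absurd h (Option.some_ne_none _).symm

theorem mem_closedNbhd_branchVertex {i q : ℕ} (hi : i < ℓ) (hq : q < n i)
    {w : Option (Σ i : Fin ℓ, Fin (n i))}
    (hw : w ∈ closedNbhdFinset (subdividedStar ℓ n) (branchVertex ℓ n i q)) :
    (q = 0 ∧ w = none) ∨ ∃ q' < n i, q ≤ q' + 1 ∧ q' ≤ q + 1 ∧ w = branchVertex ℓ n i q' := by
  simp only [closedNbhdFinset, Finset.mem_filter, Finset.mem_univ, true_and, subdividedStar,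
    SimpleGraph.fromRel_adj] at hw
  obtain rfl | ⟨-, (⟨i', hi', h, -⟩ | ⟨i', j, hj, h, rfl⟩) |
      (⟨i', hi', rfl, h⟩ | ⟨i', j, hj, rfl, h⟩)⟩ := hw
  · exact Or.inr ⟨q, hq, by omega, by omega, rfl⟩
  · exact absurd h (branchVertex_ne_none hi hq)
  · rw [some_eq_branchVertex, branchVertex_inj hi hq i'.isLt j.isLt] at h
    obtain ⟨rfl, rfl⟩ := h
    exact Or.inr ⟨j + 1, hj, by omega, by omega, some_eq_branchVertex _ ⟨_, hj⟩⟩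
  · rw [some_eq_branchVertex, branchVertex_inj hi hq i'.isLt hi'] at h
    exact Or.inl ⟨h.2, rfl⟩
  · rw [some_eq_branchVertex, branchVertex_inj hi hq i'.isLt hj] at h
    obtain ⟨rfl, rfl⟩ := h
    exact Or.inr ⟨j, j.isLt, by omega, by omega, some_eq_branchVertex _ _⟩

structure StarOpening (ℓ : ℕ) (n : ℕ → ℕ) (r : ℕ) (M B : Finset (Option (Σ i : Fin ℓ, Fin (n i))))
    : Prop where
  mem_maker : ∀ w, w ∈ M ↔ ∃ i < r, w = branchVertex ℓ n i 0
  mem_breaker : ∀ w ∈ B, ∃ i < r, ∃ q < n i, w = branchVertex ℓ n i q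

variable {r : ℕ} {M B : Finset (Option (Σ i : Fin ℓ, Fin (n i)))}

namespace StarOpening

theorem empty : StarOpening ℓ n 0 ∅ ∅ where
  mem_maker w := by simp
  mem_breaker w := by simp

theorem none_notMem_maker (hpos : ∀ i < ℓ, 0 < n i) (h : StarOpening ℓ n r M B) (hr : r ≤ ℓ) :
    none ∉ M := by
  rw [h.mem_maker]
  rintro ⟨i, hi, he⟩
  exact branchVertex_ne_none (by omega) (hpos i (by omega)) he.symm

theorem none_notMem_breaker (h : StarOpening ℓ n r M B) (hr : r ≤ ℓ) : none ∉ B := fun hB => by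
  obtain ⟨i, hi, q, hq, he⟩ := h.mem_breaker none hB
  exact branchVertex_ne_none (by omega) hq he.symm

theorem branchVertex_mem_maker_iff (hpos : ∀ i < ℓ, 0 < n i) (h : StarOpening ℓ n r M B)
    (hr : r ≤ ℓ) {i q : ℕ} (hi : i < ℓ) (hq : q < n i) :
    branchVertex ℓ n i q ∈ M ↔ i < r ∧ q = 0 := by
  rw [h.mem_maker]
  constructor
  · rintro ⟨i', hi', he⟩
    rw [branchVertex_inj hi hq (by omega) (hpos i' (by omega))] at he
    exact ⟨he.1 ▸ hi', he.2⟩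
  · rintro ⟨hi, rfl⟩
    exact ⟨i, hi, rfl⟩

theorem branchVertex_notMem_breaker (h : StarOpening ℓ n r M B) {i q : ℕ}
    (hi : i < ℓ) (hq : q < n i) (hri : r ≤ i) : branchVertex ℓ n i q ∉ B := fun hB => by
  obtain ⟨i', hi', q', hq', he⟩ := h.mem_breaker _ hB
  rw [branchVertex_inj hi hq (by omega) hq'] at he
  omega

theorem branchVertex_notMem_union (hpos : ∀ i < ℓ, 0 < n i) (h : StarOpening ℓ n r M B)
    {i q : ℕ} (hi : i < ℓ) (hq : q < n i) (hri : r ≤ i) : branchVertex ℓ n i q ∉ M ∪ B := by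
  rw [Finset.mem_union, not_or, h.branchVertex_mem_maker_iff hpos (by omega) hi hq]
  exact ⟨by omega, h.branchVertex_notMem_breaker hi hq hri⟩

theorem claim (h : StarOpening ℓ n r M B) {q : ℕ} (hq : q < n r) :
    StarOpening ℓ n (r + 1) (insert (branchVertex ℓ n r 0) M)
      (insert (branchVertex ℓ n r q) B) where
  mem_maker w := by
    rw [Finset.mem_insert, h.mem_maker]
    constructor
    · rintro (rfl | ⟨i, hi, rfl⟩)
      · exact ⟨r, r.lt_succ_self, rfl⟩
      · exact ⟨i, by omega, rfl⟩
    · rintro ⟨i, hi, rfl⟩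
      rcases Nat.lt_succ_iff_lt_or_eq.1 hi with hi | rfl
      · exact Or.inr ⟨i, hi, rfl⟩
      · exact Or.inl rfl
  mem_breaker w hw := by
    rcases Finset.mem_insert.1 hw with rfl | hw
    · exact ⟨r, r.lt_succ_self, q, hq, rfl⟩
    · obtain ⟨i, hi, q', hq', rfl⟩ := h.mem_breaker w hw
      exact ⟨i, by omega, q', hq', rfl⟩

end StarOpening

theorem isFreePath_branchTail (hpos : ∀ i < ℓ, 0 < n i) (h : StarOpening ℓ n r M B)
    (hr : r < ℓ) {u : Option (Σ i : Fin ℓ, Fin (n i))}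
    (hu : ∀ q, 0 < q → q < n r → u ≠ branchVertex ℓ n r q) :
    IsFreePath (subdividedStar ℓ n) (fun p => branchVertex ℓ n r (p + 1)) (n r - 1)
      (insert (branchVertex ℓ n r 0) M) (insert u B) where
  injOn p hp p' hp' he := by
    have := (branchVertex_inj hr (Nat.add_lt_of_lt_sub hp) hr (Nat.add_lt_of_lt_sub hp')).1 he
    omega
  notMem_maker p hp := by
    rw [Finset.mem_insert, not_or, branchVertex_inj hr (by omega) hr (hpos r hr),
      h.branchVertex_mem_maker_iff hpos hr.le hr (by omega)]
    omega
  notMem_breaker p hp := by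
    rw [Finset.mem_insert, not_or]
    exact ⟨fun he => hu (p + 1) p.succ_pos (by omega) he.symm,
      h.branchVertex_notMem_breaker hr (by omega) le_rfl⟩
  closedNbhd_subset p hp w hw := by
    obtain ⟨h0, -⟩ | ⟨q', hq', hle, hle', rfl⟩ := mem_closedNbhd_branchVertex hr (by omega) hw
    · omega
    · rcases Nat.eq_zero_or_pos q' with rfl | hq'
      · exact Or.inl (Finset.mem_insert_self _ _)
      · exact Or.inr ⟨q' - 1, by omega, by omega, by omega, by congr 1; omega⟩

def twoBranchPath (ℓ : ℕ) (n : ℕ → ℕ) (p : ℕ) : Option (Σ i : Fin ℓ, Fin (n i)) :=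
  if p < n (ℓ - 2) then branchVertex ℓ n (ℓ - 2) (n (ℓ - 2) - 1 - p)
  else if p = n (ℓ - 2) then none
  else branchVertex ℓ n (ℓ - 1) (p - n (ℓ - 2) - 1)

theorem twoBranchPath_of_lt {p : ℕ} (hp : p < n (ℓ - 2)) :
    twoBranchPath ℓ n p = branchVertex ℓ n (ℓ - 2) (n (ℓ - 2) - 1 - p) :=
  if_pos hp

theorem twoBranchPath_center : twoBranchPath ℓ n (n (ℓ - 2)) = none := by
  simp [twoBranchPath]

theorem twoBranchPath_of_gt {p : ℕ} (hp : n (ℓ - 2) < p) :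
    twoBranchPath ℓ n p = branchVertex ℓ n (ℓ - 1) (p - n (ℓ - 2) - 1) := by
  rw [twoBranchPath, if_neg hp.not_gt, if_neg hp.ne']

theorem isFreePath_twoBranchPath (hℓ : 2 ≤ ℓ) (hpos : ∀ i < ℓ, 0 < n i)
    (h : StarOpening ℓ n (ℓ - 2) M B) :
    IsFreePath (subdividedStar ℓ n) (twoBranchPath ℓ n) (n (ℓ - 2) + n (ℓ - 1) + 1) M B where
  injOn := by
    let index : Option (Σ i : Fin ℓ, Fin (n i)) → ℕ := fun v => v.elim (n (ℓ - 2)) fun x =>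
      if (x.1 : ℕ) = ℓ - 2 then n (ℓ - 2) - 1 - x.2 else n (ℓ - 2) + 1 + x.2
    refine Set.LeftInvOn.injOn (f₁' := index) fun p hp => ?_
    have hp : p < n (ℓ - 2) + n (ℓ - 1) + 1 := hp
    rcases lt_trichotomy p (n (ℓ - 2)) with hlt | rfl | hgt
    · rw [twoBranchPath_of_lt hlt, branchVertex, dif_pos ⟨by omega, by omega⟩]
      simp only [index, Option.elim, if_pos rfl]
      omega
    · rw [twoBranchPath_center]
      rfl
    · rw [twoBranchPath_of_gt hgt, branchVertex, dif_pos ⟨by omega, by omega⟩]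
      simp only [index, Option.elim, if_neg (show ℓ - 1 ≠ ℓ - 2 by omega)]
      omega
  notMem_maker p hp := by
    rcases lt_trichotomy p (n (ℓ - 2)) with hlt | rfl | hgt
    · rw [twoBranchPath_of_lt hlt,
        h.branchVertex_mem_maker_iff hpos (by omega) (by omega) (by omega)]
      omega
    · rw [twoBranchPath_center]
      exact h.none_notMem_maker hpos (by omega)
    · rw [twoBranchPath_of_gt hgt,
        h.branchVertex_mem_maker_iff hpos (by omega) (by omega) (by omega)]
      omega
  notMem_breaker p hp := by
    rcases lt_trichotomy p (n (ℓ - 2)) with hlt | rfl | hgt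
    · rw [twoBranchPath_of_lt hlt]
      exact h.branchVertex_notMem_breaker (by omega) (by omega) le_rfl
    · rw [twoBranchPath_center]
      exact h.none_notMem_breaker (by omega)
    · rw [twoBranchPath_of_gt hgt]
      exact h.branchVertex_notMem_breaker (by omega) (by omega) (by omega)
  closedNbhd_subset p hp w hw := by
    have := hpos (ℓ - 2) (by omega)
    have := hpos (ℓ - 1) (by omega)
    rcases lt_trichotomy p (n (ℓ - 2)) with hlt | rfl | hgt
    · rw [twoBranchPath_of_lt hlt] at hw
      right
      obtain ⟨h0, rfl⟩ | ⟨q', hq', hle, hle', rfl⟩ :=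
        mem_closedNbhd_branchVertex (by omega) (by omega) hw
      · exact ⟨n (ℓ - 2), by omega, by omega, by omega, twoBranchPath_center.symm⟩
      · refine ⟨n (ℓ - 2) - 1 - q', by omega, by omega, by omega, ?_⟩
        rw [twoBranchPath_of_lt (by omega)]
        congr 1
        omega
    · rw [twoBranchPath_center] at hw
      obtain rfl | ⟨i, hi, rfl⟩ := mem_closedNbhd_none hw
      · exact Or.inr ⟨n (ℓ - 2), by omega, by omega, by omega, twoBranchPath_center.symm⟩
      rcases lt_trichotomy i (ℓ - 2) with hi' | hi' | hi'
      · exact Or.inl ((h.mem_maker _).2 ⟨i, hi', rfl⟩)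
      · refine Or.inr ⟨n (ℓ - 2) - 1, by omega, by omega, by omega, ?_⟩
        rw [twoBranchPath_of_lt (by omega)]
        congr 1
        omega
      · refine Or.inr ⟨n (ℓ - 2) + 1, by omega, by omega, by omega, ?_⟩
        rw [twoBranchPath_of_gt (by omega)]
        congr 1 <;> omega
    · rw [twoBranchPath_of_gt hgt] at hw
      right
      obtain ⟨h0, rfl⟩ | ⟨q', hq', hle, hle', rfl⟩ :=
        mem_closedNbhd_branchVertex (by omega) (by omega) hw
      · exact ⟨n (ℓ - 2), by omega, by omega, by omega, twoBranchPath_center.symm⟩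
      · refine ⟨n (ℓ - 2) + 1 + q', by omega, by omega, by omega, ?_⟩
        rw [twoBranchPath_of_gt (by omega)]
        congr 1
        omega

theorem mbVal_subdividedStar_le (hℓ : 2 ≤ ℓ) (hpos : ∀ i < ℓ, 0 < n i)
    (heven : ∀ i < ℓ, Even (n i)) {t : ℕ} (h : StarOpening ℓ n r M B) (hr : r ≤ ℓ - 2)
    (hbranch : ∀ i, r ≤ i → i < ℓ - 2 → i + 1 + Nat.clog 2 (n i) ≤ r + t)
    (hlast : ℓ - 2 + Nat.clog 2 (n (ℓ - 2) + n (ℓ - 1) + 1) ≤ r + t) :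
    mbVal (nbhdHyp (subdividedStar ℓ n)) true M B ≤ t := by
  obtain ⟨d, hd⟩ : ∃ d, ℓ - 2 - r = d := ⟨_, rfl⟩
  induction d generalizing r t M B with
  | zero =>
    obtain rfl : r = ℓ - 2 := by omega
    have hodd : Odd (n (ℓ - 2) + n (ℓ - 1) + 1) :=
      ((heven _ (by omega)).add (heven _ (by omega))).add_one
    refine mbVal_le_of_isFreePath t hodd ?_ (isFreePath_twoBranchPath hℓ hpos h)
    calc n (ℓ - 2) + n (ℓ - 1) + 1
        < 2 ^ Nat.clog 2 (n (ℓ - 2) + n (ℓ - 1) + 1) :=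
          lt_two_pow_clog_of_odd hodd (by have := hpos (ℓ - 2) (by omega); omega)
      _ ≤ 2 ^ t := Nat.pow_le_pow_right two_pos (by omega)
  | succ d ih =>
    have hrℓ : r < ℓ := by omega
    obtain ⟨s, rfl⟩ : ∃ s, t = s + 1 := ⟨t - 1, by have := hbranch r le_rfl (by omega); omega⟩
    have hfree : ∃ u, u ∉ insert (branchVertex ℓ n r 0) M ∪ B := by
      have hℓ1 : ℓ - 1 < ℓ := by omega
      refine ⟨branchVertex ℓ n (ℓ - 1) 0, ?_⟩
      rw [Finset.insert_union, Finset.mem_insert, not_or,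
        branchVertex_inj hℓ1 (hpos _ hℓ1) hrℓ (hpos r hrℓ)]
      exact ⟨by omega, h.branchVertex_notMem_union hpos hℓ1 (hpos _ hℓ1) (by omega)⟩
    have hreply : ∀ u ∉ insert (branchVertex ℓ n r 0) M ∪ B,
        mbVal (nbhdHyp (subdividedStar ℓ n)) true (insert (branchVertex ℓ n r 0) M)
          (insert u B) ≤ s := by
      intro u _
      by_cases hsame : ∃ q, 0 < q ∧ q < n r ∧ u = branchVertex ℓ n r q
      · obtain ⟨q, -, hq, rfl⟩ := hsame
        refine ih (h.claim hq) (by omega) (fun i hi hi' => ?_) (by omega) (by omega)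
        have := hbranch i (by omega) hi'
        omega
      · push Not at hsame
        have hodd : Odd (n r - 1) := Nat.Even.sub_odd (hpos r hrℓ) (heven r hrℓ) odd_one
        refine mbVal_le_of_isFreePath s hodd ?_ (isFreePath_branchTail hpos h hrℓ hsame)
        calc n r - 1 < 2 ^ Nat.clog 2 (n r) := by
              have := Nat.le_pow_clog one_lt_two (n r); have := hpos r hrℓ; omega
          _ ≤ 2 ^ s := Nat.pow_le_pow_right two_pos (by have := hbranch r le_rfl (by omega); omega)
    calc mbVal (nbhdHyp (subdividedStar ℓ n)) true M B
        ≤ 1 + mbVal (nbhdHyp (subdividedStar ℓ n)) false (insert (branchVertex ℓ n r 0) M) B :=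
          mbVal_true_le_one_add (h.branchVertex_notMem_union hpos hrℓ (hpos r hrℓ) le_rfl)
      _ ≤ 1 + (s : ℕ∞) := by gcongr; exact mbVal_false_le hfree hreply
      _ = ((s + 1 : ℕ) : ℕ∞) := by push_cast; ring

end SubdividedStar

theorem stmt_19_general (ℓ : ℕ) (hℓ : 3 ≤ ℓ) (n : ℕ → ℕ)
    (hpos : ∀ i < ℓ, 0 < n i) (heven : ∀ i < ℓ, Even (n i)) :
    gammaSMB' (subdividedStar ℓ n) ≤
      (((Finset.range (ℓ - 2)).sup (fun i => (i + 1) + Nat.clog 2 (n i)) ⊔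
        ((ℓ - 2) + Nat.clog 2 (n (ℓ - 2) + n (ℓ - 1) + 1)) : ℕ) : ℕ∞) := by
  refine mbVal_subdividedStar_le (by omega) hpos heven StarOpening.empty (Nat.zero_le _)
    (fun i _ hi => ?_) (by rw [zero_add]; exact le_sup_right)
  rw [zero_add]
  exact le_sup_of_le_left (Finset.le_sup (f := fun i => i + 1 + Nat.clog 2 (n i))
    (Finset.mem_range.2 hi))

/-- For an all-even subdivided star `T = S(n 0, …, n (ℓ-1))` with `ℓ ≥ 3`
branches and `n 0 ≥ n 1 ≥ ⋯ ≥ n (ℓ-1)` positive even integers,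
`γ'_SMB(T) ≤ max({(i+1) + ⌈log₂ (n i)⌉ : 0 ≤ i ≤ ℓ-3} ∪
{ℓ-2 + ⌈log₂(n (ℓ-2) + n (ℓ-1) + 1)⌉})` (indices shifted to start from `0`). -/
theorem stmt_19 (ℓ : ℕ) (hℓ : 3 ≤ ℓ) (n : ℕ → ℕ)
    (hpos : ∀ i < ℓ, 0 < n i) (heven : ∀ i < ℓ, Even (n i))
    (hmono : ∀ i j, i ≤ j → j < ℓ → n j ≤ n i) :
    gammaSMB' (subdividedStar ℓ n) ≤
      (((Finset.range (ℓ - 2)).sup (fun i => (i + 1) + Nat.clog 2 (n i)) ⊔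
        ((ℓ - 2) + Nat.clog 2 (n (ℓ - 2) + n (ℓ - 1) + 1)) : ℕ) : ℕ∞) :=
  stmt_19_general ℓ hℓ n hpos heven
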